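/- arXiv:2509.00611 — 8 statements merged into one kernel-verified Lean document; each statement's English description precedes it below -/
import Mathlib

section
/- Let G be a group with no elements of order 2 (i.e., g^2 = e implies g = e). Then for every finite subset A of G, the integer |AA^{-1}| - |A^{-1}A| is even. -/
/-!
The map `x ↦ x⁻¹` is an involution of any symmetric set `S`, and without elements of order 2
its only fixed point is `1`. So the elements of `S` other than `1` pair off and `|S|` is odd
exactly when `1 ∈ S`. Both `A * A⁻¹` and `A⁻¹ * A` are symmetric and contain `1` when `A` is
nonempty, so their cardinalities are both odd.
-/

open scoped Pointwise

namespace Finset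

theorem even_card_of_involution {α : Type*} {s : Finset α} (g : α → α)
    (hg_mem : ∀ a ∈ s, g a ∈ s) (hg_ne : ∀ a ∈ s, g a ≠ a) (hg_invol : ∀ a ∈ s, g (g a) = a) :
    Even #s := by
  rw [← ZMod.natCast_eq_zero_iff_even, card_eq_sum_ones, Nat.cast_sum, Nat.cast_one]
  exact sum_involution (fun a _ ↦ g a) (fun _ _ ↦ by decide) (fun a ha _ ↦ hg_ne a ha)
    hg_mem hg_invol

variable {G : Type*} [Group G] [DecidableEq G]

theorem even_card_erase_one_of_inv_eq_self (hG : ∀ g : G, g ^ 2 = 1 → g = 1) {S : Finset G}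
    (hS : S⁻¹ = S) : Even #(S.erase 1) := by
  have inv_mem : ∀ a ∈ S, a⁻¹ ∈ S := fun a ha ↦ hS ▸ inv_mem_inv ha
  refine even_card_of_involution (·⁻¹) (fun a ha ↦ ?_) (fun a ha hfix ↦ ?_) (fun a _ ↦ inv_inv a)
  · obtain ⟨ha1, ha⟩ := mem_erase.1 ha
    exact mem_erase.2 ⟨inv_ne_one.2 ha1, inv_mem a ha⟩
  · exact (mem_erase.1 ha).1 (hG a (by rw [sq]; nth_rw 1 [← hfix]; exact inv_mul_cancel a))

theorem odd_card_of_inv_eq_self (hG : ∀ g : G, g ^ 2 = 1 → g = 1) {S : Finset G}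
    (hS : S⁻¹ = S) (h1 : (1 : G) ∈ S) : Odd #S :=
  card_erase_add_one h1 ▸ (even_card_erase_one_of_inv_eq_self hG hS).add_one

end Finset

/-- If `G` is a group with no elements of order 2, then for every finite subset `A` of `G`,
`|A * A⁻¹| - |A⁻¹ * A|` is even. -/
theorem stmt_0 {G : Type*} [Group G] [DecidableEq G]
    (hG : ∀ g : G, g ^ 2 = 1 → g = 1) (A : Finset G) :
    Even (((A * A⁻¹).card : ℤ) - ((A⁻¹ * A).card : ℤ)) := by
  rcases A.eq_empty_or_nonempty with rfl | hA
  · simp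
  have hA' : ¬Disjoint A A := by simpa [disjoint_self] using hA.ne_empty
  have h_right : Odd (A * A⁻¹).card :=
    Finset.odd_card_of_inv_eq_self hG (by rw [mul_inv_rev, inv_inv])
      (by rw [← div_eq_mul_inv]; exact Finset.one_mem_div_iff.2 hA')
  have h_left : Odd (A⁻¹ * A).card :=
    Finset.odd_card_of_inv_eq_self hG (by rw [mul_inv_rev, inv_inv])
      (Finset.one_mem_inv_mul_iff.2 hA')
  exact h_right.natCast.sub_odd h_left.natCast
end

section
/- Let D_∞ denote the infinite dihedral group (the group generated by r and s with relations s r = r^{-1} s and s^2 = e; in Mathlib, DihedralGroup 0). For every integer n, there exists a finite subset A of D_∞ such that |AA^{-1}| - |A^{-1}A| = n. -/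
open scoped Pointwise



def Bz : Finset ℤ := {0, 1, 3}

lemma memB {b : ℤ} (hb : b ∈ Bz) : 0 ≤ b ∧ b ≤ 3 := by
  simp [Bz, Finset.mem_insert] at hb
  rcases hb with rfl | rfl | rfl <;> omega

lemma BsubB : (Bz - Bz).card = 7 := by decide
lemma BaddB : (Bz + Bz).card = 6 := by decide

lemma transl_card (s : Finset ℤ) (c : ℤ) : (s.image (· + c)).card = s.card :=
  Finset.card_image_of_injective _ (add_left_injective c)

lemma transl_sub (s t : Finset ℤ) (c : ℤ) :
    (s.image (· + c)) - t = (s - t).image (· + c) := by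
  ext a
  simp only [Finset.mem_sub, Finset.mem_image]
  constructor
  · rintro ⟨x, ⟨s1, hs1, rfl⟩, t1, ht1, rfl⟩
    exact ⟨s1 - t1, ⟨s1, hs1, t1, ht1, rfl⟩, by ring⟩
  · rintro ⟨x, ⟨s1, hs1, t1, ht1, rfl⟩, rfl⟩
    exact ⟨s1 + c, ⟨s1, hs1, rfl⟩, t1, ht1, by ring⟩

lemma transl_add (s t : Finset ℤ) (c : ℤ) :
    t + (s.image (· + c)) = (t + s).image (· + c) := by
  ext a
  simp only [Finset.mem_add, Finset.mem_image]
  constructor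
  · rintro ⟨t1, ht1, x, ⟨s1, hs1, rfl⟩, rfl⟩
    exact ⟨t1 + s1, ⟨t1, ht1, s1, hs1, rfl⟩, by ring⟩
  · rintro ⟨x, ⟨t1, ht1, s1, hs1, rfl⟩, rfl⟩
    exact ⟨t1, ht1, s1 + c, ⟨s1, hs1, rfl⟩, by ring⟩

lemma key (n : ℕ) : ∃ Y : Finset ℤ,
    (∀ y ∈ Y, 0 ≤ y ∧ y ≤ 10 * (n : ℤ) - 7) ∧
    (Y - Bz).card = 7 * n ∧ (Bz + Y).card = 6 * n := by
  induction n with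
  | zero => exact ⟨∅, by simp⟩
  | succ n ih =>
    obtain ⟨Y, hY, hsub, hadd⟩ := ih
    refine ⟨Y ∪ Bz.image (· + 10 * (n : ℤ)), ?_, ?_, ?_⟩
    · intro y hy
      rcases Finset.mem_union.1 hy with h | h
      · have := hY y h; push_cast; omega
      · obtain ⟨b, hb, rfl⟩ := Finset.mem_image.1 h
        have := memB hb; push_cast; omega
    · rw [Finset.union_sub, transl_sub, Finset.card_union_of_disjoint, hsub, transl_card, BsubB]
      · push_cast; ring
      · rw [Finset.disjoint_left]
        rintro a ha ha'
        rw [Finset.mem_sub] at ha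
        obtain ⟨y, hy, b, hb, rfl⟩ := ha
        obtain ⟨d, hd, he⟩ := Finset.mem_image.1 ha'
        rw [Finset.mem_sub] at hd
        obtain ⟨b1, hb1, b2, hb2, rfl⟩ := hd
        have := hY y hy
        have := memB hb; have := memB hb1; have := memB hb2
        omega
    · rw [Finset.add_union, transl_add, Finset.card_union_of_disjoint, hadd, transl_card, BaddB]
      · push_cast; ring
      · rw [Finset.disjoint_left]
        rintro a ha ha'
        rw [Finset.mem_add] at ha
        obtain ⟨b, hb, y, hy, rfl⟩ := ha
        obtain ⟨d, hd, he⟩ := Finset.mem_image.1 ha'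
        rw [Finset.mem_add] at hd
        obtain ⟨b1, hb1, b2, hb2, rfl⟩ := hd
        have := hY y hy
        have := memB hb; have := memB hb1; have := memB hb2
        omega

lemma keyZ (n : ℤ) : ∃ X Y : Finset ℤ,
    ((Y - X).card : ℤ) - ((X + Y).card : ℤ) = n := by
  rcases le_or_gt 0 n with h | h
  · obtain ⟨Y, -, hsub, hadd⟩ := key n.toNat
    refine ⟨Bz, Y, ?_⟩
    rw [hsub, hadd]; push_cast; omega
  · obtain ⟨Y, -, hsub, hadd⟩ := key (-n).toNat
    refine ⟨-Bz, Y, ?_⟩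
    have h1 : Y - (-Bz) = Bz + Y := by
      ext a
      simp only [Finset.mem_sub, Finset.mem_add, Finset.mem_neg]
      constructor
      · rintro ⟨y, hy, x, ⟨b, hb, rfl⟩, rfl⟩
        exact ⟨b, hb, y, hy, by ring⟩
      · rintro ⟨b, hb, y, hy, rfl⟩
        exact ⟨y, hy, -b, ⟨b, hb, rfl⟩, by ring⟩
    have h2 : (-Bz) + Y = Y - Bz := by
      ext a
      simp only [Finset.mem_sub, Finset.mem_add, Finset.mem_neg]
      constructor
      · rintro ⟨x, ⟨b, hb, rfl⟩, y, hy, rfl⟩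
        exact ⟨y, hy, b, hb, by ring⟩
      · rintro ⟨y, hy, b, hb, rfl⟩
        exact ⟨-b, ⟨b, hb, rfl⟩, y, hy, by ring⟩
    rw [h1, h2, hsub, hadd]; push_cast; omega



open DihedralGroup Finset

@[simp] lemma r_inv' (i : ZMod 0) : (r i)⁻¹ = r (-i) := rfl
@[simp] lemma sr_inv' (i : ZMod 0) : (sr i)⁻¹ = sr i := rfl

lemma mulinv (X Y : Finset (ZMod 0)) :
    (X.image r ∪ Y.image sr) * (X.image r ∪ Y.image sr)⁻¹
      = ((X - X) ∪ (Y - Y)).image r ∪ (Y - X).image sr := by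
  ext z
  simp only [Finset.mem_mul, Finset.mem_inv, mem_union, mem_image, Finset.mem_sub]
  constructor
  · rintro ⟨a, (⟨x, hx, rfl⟩ | ⟨y, hy, rfl⟩), b, ⟨c, (⟨x', hx', rfl⟩ | ⟨y', hy', rfl⟩), rfl⟩, rfl⟩
    · exact Or.inl ⟨x - x', Or.inl ⟨x, hx, x', hx', rfl⟩, by simp [sub_eq_add_neg]⟩
    · exact Or.inr ⟨y' - x, ⟨y', hy', x, hx, rfl⟩, by simp⟩
    · exact Or.inr ⟨y - x', ⟨y, hy, x', hx', rfl⟩, by simp [sub_eq_add_neg]⟩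
    · exact Or.inl ⟨y' - y, Or.inr ⟨y', hy', y, hy, rfl⟩, by simp⟩
  · rintro (⟨a, (⟨x, hx, x', hx', rfl⟩ | ⟨y, hy, y', hy', rfl⟩), rfl⟩ | ⟨a, ⟨y, hy, x, hx, rfl⟩, rfl⟩)
    · exact ⟨r x, Or.inl ⟨x, hx, rfl⟩, (r x')⁻¹, ⟨r x', Or.inl ⟨x', hx', rfl⟩, rfl⟩, by simp [sub_eq_add_neg]⟩
    · exact ⟨sr y', Or.inr ⟨y', hy', rfl⟩, (sr y)⁻¹, ⟨sr y, Or.inr ⟨y, hy, rfl⟩, rfl⟩, by simp⟩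
    · exact ⟨sr y, Or.inr ⟨y, hy, rfl⟩, (r x)⁻¹, ⟨r x, Or.inl ⟨x, hx, rfl⟩, rfl⟩, by simp [sub_eq_add_neg]⟩

lemma invmul (X Y : Finset (ZMod 0)) :
    (X.image r ∪ Y.image sr)⁻¹ * (X.image r ∪ Y.image sr)
      = ((X - X) ∪ (Y - Y)).image r ∪ (Y + X).image sr := by
  ext z
  simp only [Finset.mem_mul, Finset.mem_inv, mem_union, mem_image, Finset.mem_sub, Finset.mem_add]
  constructor
  · rintro ⟨a, ⟨c, (⟨x, hx, rfl⟩ | ⟨y, hy, rfl⟩), rfl⟩, b, (⟨x', hx', rfl⟩ | ⟨y', hy', rfl⟩), rfl⟩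
    · exact Or.inl ⟨x' - x, Or.inl ⟨x', hx', x, hx, rfl⟩, by simp [sub_eq_add_neg, add_comm]⟩
    · exact Or.inr ⟨y' + x, ⟨y', hy', x, hx, rfl⟩, by simp [sub_eq_add_neg]⟩
    · exact Or.inr ⟨y + x', ⟨y, hy, x', hx', rfl⟩, by simp⟩
    · exact Or.inl ⟨y' - y, Or.inr ⟨y', hy', y, hy, rfl⟩, by simp⟩
  · rintro (⟨a, (⟨x, hx, x', hx', rfl⟩ | ⟨y, hy, y', hy', rfl⟩), rfl⟩ | ⟨a, ⟨y, hy, x, hx, rfl⟩, rfl⟩)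
    · exact ⟨(r x')⁻¹, ⟨r x', Or.inl ⟨x', hx', rfl⟩, rfl⟩, r x, Or.inl ⟨x, hx, rfl⟩, by simp [sub_eq_add_neg, add_comm]⟩
    · exact ⟨(sr y')⁻¹, ⟨sr y', Or.inr ⟨y', hy', rfl⟩, rfl⟩, sr y, Or.inr ⟨y, hy, rfl⟩, by simp⟩
    · exact ⟨(sr y)⁻¹, ⟨sr y, Or.inr ⟨y, hy, rfl⟩, rfl⟩, r x, Or.inl ⟨x, hx, rfl⟩, by simp⟩

open DihedralGroup Finset in
lemma card_rsr (S T : Finset (ZMod 0)) :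
    (S.image r ∪ T.image sr).card = S.card + T.card := by
  rw [Finset.card_union_of_disjoint, Finset.card_image_of_injective _ (fun a b h => by injection h),
    Finset.card_image_of_injective _ (fun a b h => by injection h)]
  rw [Finset.disjoint_left]
  rintro z hz hz'
  obtain ⟨x, -, rfl⟩ := Finset.mem_image.1 hz
  obtain ⟨y, -, h⟩ := Finset.mem_image.1 hz'
  exact absurd h (by simp)

/-- In the infinite dihedral group `D_∞` (= `DihedralGroup 0`), every integer is achieved
as the difference `|A * A⁻¹| - |A⁻¹ * A|` for some finite subset `A`. -/
theorem stmt_1 (n : ℤ) :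
    ∃ A : Finset (DihedralGroup 0),
      ((A * A⁻¹).card : ℤ) - ((A⁻¹ * A).card : ℤ) = n := by
  obtain ⟨X, Y, h⟩ := keyZ n
  set f : ℤ →+ ZMod 0 := (Int.castRingHom (ZMod 0)).toAddMonoidHom with hfdef
  have hf : Function.Injective f := Int.cast_injective
  refine ⟨(X.image f).image DihedralGroup.r ∪ (Y.image f).image DihedralGroup.sr, ?_⟩
  rw [mulinv, invmul, card_rsr, card_rsr]
  have h1 : Y.image f - X.image f = (Y - X).image f := by
    ext a
    simp only [Finset.mem_sub, Finset.mem_image]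
    constructor
    · rintro ⟨u, ⟨y, hy, rfl⟩, v, ⟨x, hx, rfl⟩, rfl⟩
      exact ⟨y - x, ⟨y, hy, x, hx, rfl⟩, (map_sub f y x)⟩
    · rintro ⟨u, ⟨y, hy, x, hx, rfl⟩, rfl⟩
      exact ⟨f y, ⟨y, hy, rfl⟩, f x, ⟨x, hx, rfl⟩, (map_sub f y x).symm⟩
  have h2 : Y.image f + X.image f = (X + Y).image f := by
    ext a
    simp only [Finset.mem_add, Finset.mem_image]
    constructor
    · rintro ⟨u, ⟨y, hy, rfl⟩, v, ⟨x, hx, rfl⟩, rfl⟩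
      exact ⟨x + y, ⟨x, hx, y, hy, rfl⟩, by rw [map_add]; ring⟩
    · rintro ⟨u, ⟨x, hx, y, hy, rfl⟩, rfl⟩
      exact ⟨f y, ⟨y, hy, rfl⟩, f x, ⟨x, hx, rfl⟩, by rw [map_add]; ring⟩
  rw [h1, h2, Finset.card_image_of_injective _ hf, Finset.card_image_of_injective _ hf]
  push_cast
  omega
end

section
/- Let D_∞ be the infinite dihedral group with elements r^i and s r^i for i ∈ ℤ. Let B be a finite nonempty subset of ℤ, and let A = {r^b : b ∈ B} ∪ {s r^b : b ∈ B} ⊆ D_∞. Then |AA^{-1}| - |A^{-1}A| = |B - B| - |B + B|, where B + B = {b + b' : b, b' ∈ B} and B - B = {b - b' : b, b' ∈ B}. -/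
/-!
Multiplying the rotation part `r^B` and the reflection part `s r^B` of `A` against those of `A⁻¹`
gives exponents `a - b` in every case of `A A⁻¹`, so `A A⁻¹ = r^(B-B) ∪ s r^(B-B)`, whereas in
`A⁻¹ A` the mixed products are `r^(-a) s r^b = s r^(a+b)`, so `A⁻¹ A = r^(B-B) ∪ s r^(B+B)`.
Rotations and reflections are disjoint and `b ↦ r^b`, `b ↦ s r^b` are injective.
-/

open scoped Pointwise

open Finset

theorem Finset.image_mul_image {α β γ : Type*} [DecidableEq γ] [Mul γ] (p : α → γ) (q : β → γ)
    (s : Finset α) (t : Finset β) :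
    s.image p * t.image q = image₂ (fun a b => p a * q b) s t :=
  (image₂_image_left ..).trans (image₂_image_right ..)

namespace DihedralGroup

variable {n : ℕ} (B C : Finset (ZMod n))

theorem image_r_mul_image_r : B.image r * C.image r = (B + C).image r := by
  simp only [image_mul_image, r_mul_r]
  exact (image_image₂ ..).symm

theorem image_r_mul_image_sr : B.image r * C.image sr = (C - B).image sr := by
  simp only [image_mul_image, r_mul_sr]
  rw [image₂_swap]
  exact (image_image₂ ..).symm

theorem image_sr_mul_image_r : B.image sr * C.image r = (B + C).image sr := by
  simp only [image_mul_image, sr_mul_r]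
  exact (image_image₂ ..).symm

theorem image_sr_mul_image_sr : B.image sr * C.image sr = (C - B).image r := by
  simp only [image_mul_image, sr_mul_sr]
  rw [image₂_swap]
  exact (image_image₂ ..).symm

theorem inv_image_r_union_image_sr :
    (B.image r ∪ C.image sr)⁻¹ = (-B).image r ∪ C.image sr := by
  simp only [inv_def, neg_def, image_union, image_image, Function.comp_def, inv_r, inv_sr]

theorem card_image_r_union_image_sr :
    (B.image r ∪ C.image sr).card = B.card + C.card := by
  rw [card_union_of_disjoint, card_image_of_injective _ fun _ _ => r.inj,
    card_image_of_injective _ fun _ _ => sr.inj]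
  simp [disjoint_left]

theorem mul_inv_image_r_union_image_sr :
    (B.image r ∪ B.image sr) * (B.image r ∪ B.image sr)⁻¹ = (B - B).image r ∪ (B - B).image sr := by
  rw [inv_image_r_union_image_sr, union_mul, mul_union, mul_union, image_r_mul_image_r,
    image_r_mul_image_sr, image_sr_mul_image_r, image_sr_mul_image_sr, ← sub_eq_add_neg]
  ext; simp only [mem_union]; tauto

theorem inv_mul_image_r_union_image_sr :
    (B.image r ∪ B.image sr)⁻¹ * (B.image r ∪ B.image sr) = (B - B).image r ∪ (B + B).image sr := by
  rw [inv_image_r_union_image_sr, union_mul, mul_union, mul_union, image_r_mul_image_r,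
    image_r_mul_image_sr, image_sr_mul_image_r, image_sr_mul_image_sr, sub_neg_eq_add,
    neg_add_eq_sub]
  ext; simp only [mem_union]; tauto

theorem card_mul_inv_sub_card_inv_mul_image_r_union_image_sr :
    (#((B.image r ∪ B.image sr) * (B.image r ∪ B.image sr)⁻¹) : ℤ) -
        #((B.image r ∪ B.image sr)⁻¹ * (B.image r ∪ B.image sr)) =
      #(B - B) - #(B + B) := by
  rw [mul_inv_image_r_union_image_sr, inv_mul_image_r_union_image_sr,
    card_image_r_union_image_sr, card_image_r_union_image_sr]
  push_cast
  ring

end DihedralGroup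

theorem stmt_2_general (B : Finset ℤ)
    (A : Finset (DihedralGroup 0))
    (hA : A = B.image (fun b => DihedralGroup.r (b : ZMod 0)) ∪
            B.image (fun b => DihedralGroup.sr (b : ZMod 0))) :
    ((A * A⁻¹).card : ℤ) - ((A⁻¹ * A).card : ℤ)
      = ((B - B).card : ℤ) - ((B + B).card : ℤ) := by
  subst hA
  -- `ZMod 0` is `ℤ` and the cast `ℤ → ZMod 0` is the identity
  exact DihedralGroup.card_mul_inv_sub_card_inv_mul_image_r_union_image_sr (n := 0) B

/-- For a finite nonempty `B ⊆ ℤ` and `A = {r^b : b ∈ B} ∪ {s r^b : b ∈ B} ⊆ D_∞`, we have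
`|A * A⁻¹| - |A⁻¹ * A| = |B - B| - |B + B|`. -/
theorem stmt_2 (B : Finset ℤ) (hB : B.Nonempty)
    (A : Finset (DihedralGroup 0))
    (hA : A = B.image (fun b => DihedralGroup.r (b : ZMod 0)) ∪
            B.image (fun b => DihedralGroup.sr (b : ZMod 0))) :
    ((A * A⁻¹).card : ℤ) - ((A⁻¹ * A).card : ℤ)
      = ((B - B).card : ℤ) - ((B + B).card : ℤ) :=
  stmt_2_general B A hA
end

section
/- Let F_2 be the free group on two generators. For every integer n, there exists a finite subset A of F_2 such that |AA^{-1}| - |A^{-1}A| = 2n. -/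
/-!
Write `a, b` for the generators and `a^I = {a^i : i ∈ I}`. For `A = a^I ∪ a^J b⁻¹`,
`AA⁻¹ = a^((I-I) ∪ (J-J)) ∪ M ∪ M⁻¹` with `M = a^I b a^(-J)`, while
`A⁻¹A = a^(I-I) ∪ b a^((J-J) \ {0}) b⁻¹ ∪ N ∪ N⁻¹` with `N = b a^(I-J)`.
The exponent sum of `b` separates `M`, `M⁻¹` and the rest, and the words in each piece are told
apart by letting `F₂` act on lamplighter configurations `ℤ × (ℤ →₀ ℤ)` (`a` moves the
lamplighter, `b` raises the lamp under him). For `I = [0, 1]`, `J = [0, m]` this gives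
`|AA⁻¹| = 6m + 5` and `|A⁻¹A| = 4m + 7`; passing to `A⁻¹` exchanges the two quotient sets.
-/

open scoped Pointwise
open Finset

lemma Int.Icc_sub_Icc {p q r s : ℤ} (hpq : p ≤ q) (hrs : r ≤ s) :
    Icc p q - Icc r s = Icc (p - s) (q - r) := by
  ext k
  simp only [mem_sub, mem_Icc]
  constructor
  · rintro ⟨x, hx, y, hy, rfl⟩
    omega
  · intro hk
    exact ⟨max p (k + r), by omega, max p (k + r) - k, by omega, by omega⟩

lemma card_union_union_inv {G : Type*} [Group G] [DecidableEq G] (χ : G →* Multiplicative ℤ)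
    {C N : Finset G} (hC : ∀ x ∈ C, χ x = .ofAdd 0) (hN : ∀ x ∈ N, χ x = .ofAdd 1) :
    #(C ∪ (N ∪ N⁻¹)) = #C + 2 * #N := by
  have hN' : ∀ x ∈ N⁻¹, χ x = .ofAdd (-1) := by
    intro x hx
    obtain ⟨y, hy, rfl⟩ := mem_inv.1 hx
    rw [map_inv, hN y hy]
    rfl
  have disjoint {s t : Finset G} {u v : ℤ} (hs : ∀ x ∈ s, χ x = .ofAdd u)
      (ht : ∀ x ∈ t, χ x = .ofAdd v) (huv : u ≠ v) : Disjoint s t :=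
    disjoint_left.2 fun x hxs hxt => huv (by simpa [hs x hxs] using ht x hxt)
  rw [card_union_of_disjoint (disjoint_union_right.2 ⟨disjoint hC hN (by decide),
    disjoint hC hN' (by decide)⟩), card_union_of_disjoint (disjoint hN hN' (by decide)),
    card_inv, two_mul]

namespace QuotientSetDifference

def a : FreeGroup (Fin 2) := FreeGroup.of 0
def b : FreeGroup (Fin 2) := FreeGroup.of 1

noncomputable def bExponentSum : FreeGroup (Fin 2) →* Multiplicative ℤ :=
  FreeGroup.lift ![1, .ofAdd 1]

@[simp] lemma bExponentSum_a : bExponentSum a = 1 := by simp [bExponentSum, a]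
@[simp] lemma bExponentSum_b : bExponentSum b = .ofAdd 1 := by simp [bExponentSum, b]

abbrev LampConfig := ℤ × (ℤ →₀ ℤ)

def move : Equiv.Perm LampConfig := (Equiv.addRight 1).prodCongr (Equiv.refl _)

noncomputable def raise : Equiv.Perm LampConfig where
  toFun p := (p.1, p.2 + Finsupp.single p.1 1)
  invFun p := (p.1, p.2 - Finsupp.single p.1 1)
  left_inv p := by simp
  right_inv p := by simp

@[simp] lemma move_zpow_apply (k : ℤ) (p : LampConfig) : (move ^ k) p = (p.1 + k, p.2) := by
  induction k using Int.induction_on generalizing p with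
  | zero => simp
  | succ k ih =>
    rw [zpow_add_one, Equiv.Perm.mul_apply, ih]
    simp [move]
    ring
  | pred k ih =>
    rw [zpow_sub_one, Equiv.Perm.mul_apply, ih]
    simp [move, Equiv.Perm.inv_def]
    ring

@[simp] lemma move_zpow_symm_apply (k : ℤ) (p : LampConfig) :
    (move ^ k).symm p = (p.1 - k, p.2) := by
  rw [← Equiv.Perm.inv_def, ← zpow_neg, move_zpow_apply, sub_eq_add_neg]

@[simp] lemma raise_apply (p : LampConfig) :
    raise p = (p.1, p.2 + Finsupp.single p.1 1) := rfl

@[simp] lemma raise_symm_apply (p : LampConfig) :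
    raise.symm p = (p.1, p.2 - Finsupp.single p.1 1) := rfl

noncomputable def lampAction : FreeGroup (Fin 2) →* Equiv.Perm LampConfig :=
  FreeGroup.lift ![move, raise]

@[simp] lemma lampAction_a : lampAction a = move := by simp [lampAction, a]
@[simp] lemma lampAction_b : lampAction b = raise := by simp [lampAction, b]

noncomputable def lampState (g : FreeGroup (Fin 2)) : LampConfig := lampAction g (0, 0)

lemma lampState_zpow_a (k : ℤ) : lampState (a ^ k) = (k, 0) := by
  simp [lampState]

lemma lampState_b_mul_zpow_a (k : ℤ) : lampState (b * a ^ k) = (k, Finsupp.single k 1) := by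
  simp [lampState]

lemma lampState_conj_b_zpow_a (k : ℤ) :
    lampState (b * a ^ k * b⁻¹) = (k, Finsupp.single k 1 - Finsupp.single 0 1) := by
  simp [lampState]
  abel

lemma lampState_zpow_a_mul_b_mul_zpow_a (i j : ℤ) :
    lampState (a ^ i * b * a ^ (-j)) = (i - j, Finsupp.single (-j) 1) := by
  simp [lampState]
  ring

lemma zpow_a_injective : Function.Injective (a ^ · : ℤ → FreeGroup (Fin 2)) := by
  intro k l h
  simpa [lampState_zpow_a] using congrArg lampState h

lemma b_mul_zpow_a_injective : Function.Injective (b * a ^ · : ℤ → FreeGroup (Fin 2)) := by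
  intro k l h
  simpa [lampState_b_mul_zpow_a] using congrArg (fun g => (lampState g).1) h

lemma conj_b_zpow_a_injective : Function.Injective (fun k : ℤ => b * a ^ k * b⁻¹) := by
  intro k l h
  simpa [lampState_conj_b_zpow_a] using congrArg (fun g => (lampState g).1) h

lemma zpow_a_mul_b_mul_zpow_a_injective :
    Function.Injective (fun p : ℤ × ℤ => a ^ p.1 * b * a ^ (-p.2)) := by
  rintro ⟨i, j⟩ ⟨i', j'⟩ h
  have := congrArg lampState h
  simp only [lampState_zpow_a_mul_b_mul_zpow_a, Prod.mk.injEq,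
    Finsupp.single_left_inj one_ne_zero] at this ⊢
  omega

lemma zpow_a_ne_conj_b {k l : ℤ} (hl : l ≠ 0) : a ^ k ≠ b * a ^ l * b⁻¹ := by
  intro h
  have := congrArg (fun g => (lampState g).2) h
  simp only [lampState_zpow_a, lampState_conj_b_zpow_a] at this
  exact hl ((Finsupp.single_left_inj one_ne_zero).1 (sub_eq_zero.1 this.symm))

noncomputable def layered (I J : Finset ℤ) : Finset (FreeGroup (Fin 2)) :=
  I.image (a ^ ·) ∪ J.image (a ^ · * b⁻¹)

lemma layered_mul_inv (I J : Finset ℤ) :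
    layered I J * (layered I J)⁻¹ = ((I - I) ∪ (J - J)).image (a ^ ·) ∪
      ((I ×ˢ J).image (fun p => a ^ p.1 * b * a ^ (-p.2)) ∪
        ((I ×ˢ J).image (fun p => a ^ p.1 * b * a ^ (-p.2)))⁻¹) := by
  ext x
  simp only [layered, mem_mul, mem_inv, mem_union, mem_image, mem_sub, mem_product]
  constructor
  · rintro ⟨y, (⟨i, hi, rfl⟩ | ⟨j, hj, rfl⟩), z, ⟨w, (⟨i', hi', rfl⟩ | ⟨j', hj', rfl⟩), rfl⟩, rfl⟩
    · exact .inl ⟨i - i', .inl ⟨i, hi, i', hi', rfl⟩, by group⟩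
    · exact .inr (.inl ⟨(i, j'), ⟨hi, hj'⟩, by group⟩)
    · exact .inr (.inr ⟨_, ⟨(i', j), ⟨hi', hj⟩, rfl⟩, by group⟩)
    · exact .inl ⟨j - j', .inr ⟨j, hj, j', hj', rfl⟩, by group⟩
  · rintro (⟨_, (⟨i, hi, i', hi', rfl⟩ | ⟨j, hj, j', hj', rfl⟩), rfl⟩ | ⟨⟨i, j⟩, ⟨hi, hj⟩, rfl⟩ |
      ⟨_, ⟨⟨i, j⟩, ⟨hi, hj⟩, rfl⟩, rfl⟩)
    · exact ⟨_, .inl ⟨i, hi, rfl⟩, _, ⟨_, .inl ⟨i', hi', rfl⟩, rfl⟩, by group⟩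
    · exact ⟨_, .inr ⟨j, hj, rfl⟩, _, ⟨_, .inr ⟨j', hj', rfl⟩, rfl⟩, by group⟩
    · exact ⟨_, .inl ⟨i, hi, rfl⟩, _, ⟨_, .inr ⟨j, hj, rfl⟩, rfl⟩, by group⟩
    · exact ⟨_, .inr ⟨j, hj, rfl⟩, _, ⟨_, .inl ⟨i, hi, rfl⟩, rfl⟩, by group⟩

lemma layered_inv_mul {I : Finset ℤ} (hI : I.Nonempty) (J : Finset ℤ) :
    (layered I J)⁻¹ * layered I J =
      ((I - I).image (a ^ ·) ∪ ((J - J).erase 0).image (fun k => b * a ^ k * b⁻¹)) ∪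
        ((I - J).image (b * a ^ ·) ∪ ((I - J).image (b * a ^ ·))⁻¹) := by
  ext x
  simp only [layered, mem_mul, mem_inv, mem_union, mem_image, mem_sub, mem_erase]
  constructor
  · rintro ⟨_, ⟨y, (⟨i, hi, rfl⟩ | ⟨j, hj, rfl⟩), rfl⟩, z, (⟨i', hi', rfl⟩ | ⟨j', hj', rfl⟩), rfl⟩
    · exact .inl (.inl ⟨i' - i, ⟨i', hi', i, hi, rfl⟩, by group⟩)
    · exact .inr (.inr ⟨_, ⟨i - j', ⟨i, hi, j', hj', rfl⟩, rfl⟩, by group⟩)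
    · exact .inr (.inl ⟨i' - j, ⟨i', hi', j, hj, rfl⟩, by group⟩)
    · obtain rfl | hjj := eq_or_ne j' j
      · obtain ⟨i, hi⟩ := hI
        exact .inl (.inl ⟨i - i, ⟨i, hi, i, hi, rfl⟩, by group⟩)
      · exact .inl (.inr ⟨j' - j, ⟨sub_ne_zero.2 hjj, j', hj', j, hj, rfl⟩, by group⟩)
  · rintro ((⟨_, ⟨i', hi', i, hi, rfl⟩, rfl⟩ | ⟨_, ⟨-, j', hj', j, hj, rfl⟩, rfl⟩) |
      ⟨_, ⟨i, hi, j, hj, rfl⟩, rfl⟩ | ⟨_, ⟨_, ⟨i, hi, j, hj, rfl⟩, rfl⟩, rfl⟩)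
    · exact ⟨_, ⟨_, .inl ⟨i, hi, rfl⟩, rfl⟩, _, .inl ⟨i', hi', rfl⟩, by group⟩
    · exact ⟨_, ⟨_, .inr ⟨j, hj, rfl⟩, rfl⟩, _, .inr ⟨j', hj', rfl⟩, by group⟩
    · exact ⟨_, ⟨_, .inr ⟨j, hj, rfl⟩, rfl⟩, _, .inl ⟨i, hi, rfl⟩, by group⟩
    · exact ⟨_, ⟨_, .inl ⟨i, hi, rfl⟩, rfl⟩, _, .inr ⟨j, hj, rfl⟩, by group⟩

lemma card_layered_mul_inv (I J : Finset ℤ) :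
    #(layered I J * (layered I J)⁻¹) = #((I - I) ∪ (J - J)) + 2 * (#I * #J) := by
  rw [layered_mul_inv, card_union_union_inv bExponentSum,
    card_image_of_injective _ zpow_a_injective,
    card_image_of_injective _ zpow_a_mul_b_mul_zpow_a_injective, card_product]
  all_goals simp only [forall_mem_image]
  all_goals simp

lemma card_layered_inv_mul {I : Finset ℤ} (hI : I.Nonempty) (J : Finset ℤ) :
    #((layered I J)⁻¹ * layered I J) = #(I - I) + #((J - J).erase 0) + 2 * #(I - J) := by
  rw [layered_inv_mul hI, card_union_union_inv bExponentSum, card_union_of_disjoint,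
    card_image_of_injective _ zpow_a_injective, card_image_of_injective _ conj_b_zpow_a_injective,
    card_image_of_injective _ b_mul_zpow_a_injective]
  · simp only [disjoint_left, mem_image, mem_erase]
    rintro _ ⟨k, -, rfl⟩ ⟨l, ⟨hl, -⟩, h⟩
    exact zpow_a_ne_conj_b hl h.symm
  all_goals simp only [forall_mem_union, forall_mem_image]
  all_goals simp

lemma card_mul_inv_sub_card_inv_mul_layered {m : ℤ} (hm : 1 ≤ m) :
    (#(layered (Icc 0 1) (Icc 0 m) * (layered (Icc 0 1) (Icc 0 m))⁻¹) : ℤ) -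
      #((layered (Icc 0 1) (Icc 0 m))⁻¹ * layered (Icc 0 1) (Icc 0 m)) = 2 * m - 2 := by
  rw [card_layered_mul_inv, card_layered_inv_mul (nonempty_Icc.2 zero_le_one),
    Int.Icc_sub_Icc zero_le_one zero_le_one, Int.Icc_sub_Icc (by omega) (by omega),
    Int.Icc_sub_Icc zero_le_one (by omega),
    union_eq_right.2 (Icc_subset_Icc (by omega) (by omega)), card_erase_of_mem (by simp; omega)]
  norm_num [Int.card_Icc]
  omega

end QuotientSetDifference

/-- In the free group on two generators, every even integer `2n` is achieved as the
difference `|A * A⁻¹| - |A⁻¹ * A|` for some finite subset `A`. -/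
theorem stmt_3 (n : ℤ) :
    ∃ A : Finset (FreeGroup (Fin 2)),
      ((A * A⁻¹).card : ℤ) - ((A⁻¹ * A).card : ℤ) = 2 * n := by
  obtain hn | hn := le_total 0 n
  · exact ⟨QuotientSetDifference.layered (Icc 0 1) (Icc 0 (n + 1)),
      by rw [QuotientSetDifference.card_mul_inv_sub_card_inv_mul_layered (by omega)]; ring⟩
  · refine ⟨(QuotientSetDifference.layered (Icc 0 1) (Icc 0 (1 - n)))⁻¹, ?_⟩
    have := QuotientSetDifference.card_mul_inv_sub_card_inv_mul_layered (m := 1 - n) (by omega)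
    rw [inv_inv]
    linarith
end

section
/- Let n ≥ 1 and let F_{3n} be the free group on the 3n generators x_1, y_1, z_1, …, x_n, y_n, z_n. Let A_n = ⋃_{i=1}^{n} {x_i, y_i^{-1}, y_i^{-1} x_i^{-1} y_i^{-1}, x_i z_i, y_i^{-1} z_i}. Then |A_n A_n^{-1}| - |A_n^{-1} A_n| = 2n. -/
/-!
`A_n` is the union of copies of `A_1 ⊆ F_3` placed in the `n` free factors of `F_{3n}`. A product
`a b` of elements from two distinct factors remembers both `a` and `b` (they are its projections
onto those factors), and it never lies in a single factor; products inside one factor stay there.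
So for `U = A_1` and `V = A_1⁻¹` (or the other way round), both avoiding `1` and disjoint,
`|⋃ U_i · ⋃ V_i| = n (|UV| - 1) + 1 + n (n - 1) |U| |V|`. The cross terms agree for `A A⁻¹` and
`A⁻¹ A`, leaving `n (|A_1 A_1⁻¹| - |A_1⁻¹ A_1|) = n (17 - 15)`, a finite computation in `F_3`.
-/

open scoped Pointwise

open Finset

namespace FreeGroup

variable {ι α : Type*}

def embedFactor (i : ι) : FreeGroup α →* FreeGroup (ι × α) := map (Prod.mk i)

def projFactor [DecidableEq ι] (i : ι) : FreeGroup (ι × α) →* FreeGroup α :=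
  lift fun p => if p.1 = i then of p.2 else 1

lemma embedFactor_injective (i : ι) : Function.Injective (embedFactor (α := α) i) :=
  map_injective (Prod.mk_right_injective i)

@[simp]
lemma projFactor_embedFactor [DecidableEq ι] (m i : ι) (u : FreeGroup α) :
    projFactor m (embedFactor i u) = if i = m then u else 1 := by
  split_ifs with h
  · subst h
    show (projFactor i).comp (embedFactor i) u = MonoidHom.id _ u
    congr 1
    ext a
    simp [projFactor, embedFactor]
  · show (projFactor m).comp (embedFactor i) u = (1 : FreeGroup α →* FreeGroup α) u
    congr 1
    ext a
    simp [projFactor, embedFactor, h]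

section Counting

variable [Fintype ι] [DecidableEq ι] [DecidableEq α] {U V W : Finset (FreeGroup α)}

def copies (U : Finset (FreeGroup α)) : Finset (FreeGroup (ι × α)) :=
  (univ ×ˢ U).image fun p => embedFactor p.1 p.2

def mixedProducts (U V : Finset (FreeGroup α)) : Finset (FreeGroup (ι × α)) :=
  ((univ : Finset ι).offDiag ×ˢ (U ×ˢ V)).image
    fun q => embedFactor q.1.1 q.2.1 * embedFactor q.1.2 q.2.2

lemma mem_copies {w : FreeGroup (ι × α)} :
    w ∈ copies U ↔ ∃ i, ∃ u ∈ U, embedFactor i u = w := by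
  simp [copies]

lemma copies_inv : (copies U : Finset (FreeGroup (ι × α)))⁻¹ = copies U⁻¹ := by
  ext w
  simp only [mem_inv', mem_copies]
  constructor
  · rintro ⟨i, u, hu, h⟩
    exact ⟨i, u⁻¹, by simpa using hu, by rw [_root_.map_inv, h, inv_inv]⟩
  · rintro ⟨i, u, hu, rfl⟩
    exact ⟨i, u⁻¹, hu, _root_.map_inv _ _⟩

lemma copies_mul_copies :
    (copies U : Finset (FreeGroup (ι × α))) * copies V = copies (U * V) ∪ mixedProducts U V := by
  ext w
  simp only [mem_mul, mem_union, mem_copies, mixedProducts, mem_image, mem_product, mem_offDiag,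
    mem_univ, true_and, Prod.exists]
  constructor
  · rintro ⟨_, ⟨i, u, hu, rfl⟩, _, ⟨j, v, hv, rfl⟩, rfl⟩
    by_cases hij : i = j
    · subst hij
      exact Or.inl ⟨i, _, ⟨u, hu, v, hv, rfl⟩, _root_.map_mul _ _ _⟩
    · exact Or.inr ⟨i, j, u, v, ⟨hij, hu, hv⟩, rfl⟩
  · rintro (⟨i, _, ⟨u, hu, v, hv, rfl⟩, rfl⟩ | ⟨i, j, u, v, ⟨-, hu, hv⟩, rfl⟩)
    · exact ⟨_, ⟨i, u, hu, rfl⟩, _, ⟨i, v, hv, rfl⟩, (_root_.map_mul _ _ _).symm⟩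
    · exact ⟨_, ⟨i, u, hu, rfl⟩, _, ⟨j, v, hv, rfl⟩, rfl⟩

lemma card_copies_of_one_notMem (h : 1 ∉ W) :
    (copies W : Finset (FreeGroup (ι × α))).card = Fintype.card ι * W.card := by
  rw [copies, card_image_of_injOn, card_product, card_univ]
  rintro ⟨i, u⟩ hu ⟨k, u'⟩ - heq
  have hi : u = if k = i then u' else 1 := by simpa using congrArg (projFactor i) heq
  obtain rfl : k = i := by
    by_contra hki
    rw [if_neg hki] at hi
    exact h (hi ▸ (mem_product.1 hu).2)
  rw [hi, if_pos rfl]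

lemma copies_eq_insert_one [Nonempty ι] (h : 1 ∈ W) :
    (copies W : Finset (FreeGroup (ι × α))) = insert 1 (copies (W.erase 1)) := by
  ext w
  simp only [mem_insert, mem_copies, mem_erase]
  constructor
  · rintro ⟨i, u, hu, rfl⟩
    by_cases hu1 : u = 1
    · simp [hu1]
    · exact Or.inr ⟨i, u, ⟨hu1, hu⟩, rfl⟩
  · rintro (rfl | ⟨i, u, ⟨-, hu⟩, rfl⟩)
    · exact ⟨Classical.arbitrary ι, 1, h, _root_.map_one _⟩
    · exact ⟨i, u, hu, rfl⟩

lemma card_copies_of_one_mem [Nonempty ι] (h : 1 ∈ W) :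
    (copies W : Finset (FreeGroup (ι × α))).card = Fintype.card ι * (W.erase 1).card + 1 := by
  rw [copies_eq_insert_one h, card_insert_of_notMem, card_copies_of_one_notMem (notMem_erase 1 W)]
  rw [mem_copies]
  rintro ⟨i, u, hu, h1⟩
  exact (mem_erase.1 hu).1 (embedFactor_injective i (h1.trans (_root_.map_one _).symm))

lemma card_mixedProducts (hU : 1 ∉ U) (hV : 1 ∉ V) (hUV : Disjoint U V) :
    (mixedProducts U V : Finset (FreeGroup (ι × α))).card
      = (univ : Finset ι).offDiag.card * (U.card * V.card) := by
  rw [mixedProducts, card_image_of_injOn, card_product, card_product]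
  rintro ⟨⟨i, j⟩, u, v⟩ hq ⟨⟨k, l⟩, u', v'⟩ hq' heq
  simp only [coe_product, Set.mem_prod, mem_coe, mem_offDiag, mem_univ, true_and] at hq hq' heq
  obtain ⟨hij, hu, hv⟩ := hq
  obtain ⟨hkl, hu', hv'⟩ := hq'
  have hi : u = (if k = i then u' else 1) * (if l = i then v' else 1) := by
    simpa [Ne.symm hij] using congrArg (projFactor i) heq
  have hj : v = (if k = j then u' else 1) * (if l = j then v' else 1) := by
    simpa [hij] using congrArg (projFactor j) heq
  obtain rfl : k = i := by
    by_contra hki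
    rw [if_neg hki, one_mul] at hi
    by_cases hli : l = i
    · rw [if_pos hli] at hi
      exact disjoint_left.1 hUV hu (hi ▸ hv')
    · rw [if_neg hli] at hi
      exact hU (hi ▸ hu)
  obtain rfl : l = j := by
    by_contra hlj
    rw [if_neg hij, if_neg hlj, mul_one] at hj
    exact hV (hj ▸ hv)
  rw [if_pos rfl, if_neg (Ne.symm hij), mul_one] at hi
  rw [if_neg hij, if_pos rfl, one_mul] at hj
  rw [hi, hj]

lemma disjoint_copies_mixedProducts (hU : 1 ∉ U) (hV : 1 ∉ V) :
    Disjoint (copies W : Finset (FreeGroup (ι × α))) (mixedProducts U V) := by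
  rw [disjoint_left]
  rintro _ hw hw'
  obtain ⟨k, c, -, rfl⟩ := mem_copies.1 hw
  obtain ⟨⟨⟨i, j⟩, u, v⟩, hq, heq⟩ := mem_image.1 hw'
  simp only [mem_product, mem_offDiag, mem_univ, true_and] at hq heq
  obtain ⟨hij, hu, hv⟩ := hq
  have hi : u = if k = i then c else 1 := by
    simpa [Ne.symm hij] using congrArg (projFactor i) heq
  have hj : v = if k = j then c else 1 := by
    simpa [hij] using congrArg (projFactor j) heq
  by_cases hki : k = i
  · rw [if_neg (hki ▸ hij)] at hj
    exact hV (hj ▸ hv)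
  · rw [if_neg hki] at hi
    exact hU (hi ▸ hu)

lemma card_copies_mul_copies [Nonempty ι] (hU : 1 ∉ U) (hV : 1 ∉ V) (hUV : Disjoint U V)
    (h1 : 1 ∈ U * V) :
    (copies U * copies V : Finset (FreeGroup (ι × α))).card
      = Fintype.card ι * ((U * V).erase 1).card + 1
        + (univ : Finset ι).offDiag.card * (U.card * V.card) := by
  rw [copies_mul_copies, card_union_of_disjoint (disjoint_copies_mixedProducts hU hV),
    card_copies_of_one_mem h1, card_mixedProducts hU hV hUV]

end Counting

end FreeGroup

open FreeGroup

-- `A_1`, with `x₁, y₁, z₁` realized as `of 0, of 1, of 2`.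
def A₁ : Finset (FreeGroup (Fin 3)) :=
  {of 0, (of 1)⁻¹, (of 1)⁻¹ * (of 0)⁻¹ * (of 1)⁻¹, of 0 * of 2, (of 1)⁻¹ * of 2}

lemma one_notMem_A₁ : 1 ∉ A₁ := by decide

lemma one_notMem_A₁_inv : 1 ∉ A₁⁻¹ := by decide

lemma disjoint_A₁_A₁_inv : Disjoint A₁ A₁⁻¹ := by decide

lemma card_A₁_mul_inv_erase_one : ((A₁ * A₁⁻¹).erase 1).card = 16 := by decide

lemma card_A₁_inv_mul_erase_one : ((A₁⁻¹ * A₁).erase 1).card = 14 := by decide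

/-- For `n ≥ 1`, in the free group on `3n` generators `x_i, y_i, z_i` (`1 ≤ i ≤ n`),
the set `A_n = ⋃_i {x_i, y_i⁻¹, y_i⁻¹x_i⁻¹y_i⁻¹, x_i z_i, y_i⁻¹ z_i}` satisfies
`|A_n A_n⁻¹| - |A_n⁻¹ A_n| = 2n`. Here the free group on `3n` generators is realized as
`FreeGroup (Fin n × Fin 3)`, with `x_i = of (i, 0)`, `y_i = of (i, 1)`, `z_i = of (i, 2)`. -/
theorem stmt_5 (n : ℕ) (hn : 1 ≤ n)
    (x y z : Fin n → FreeGroup (Fin n × Fin 3))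
    (hx : ∀ i, x i = FreeGroup.of (i, 0))
    (hy : ∀ i, y i = FreeGroup.of (i, 1))
    (hz : ∀ i, z i = FreeGroup.of (i, 2))
    (A : Finset (FreeGroup (Fin n × Fin 3)))
    (hA : A = Finset.univ.biUnion
      (fun i : Fin n =>
        {x i, (y i)⁻¹, (y i)⁻¹ * (x i)⁻¹ * (y i)⁻¹, x i * z i, (y i)⁻¹ * z i})) :
    ((A * A⁻¹).card : ℤ) - ((A⁻¹ * A).card : ℤ) = 2 * n := by
  have : Nonempty (Fin n) := ⟨⟨0, hn⟩⟩
  have hA₁ : A = copies A₁ := by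
    ext w
    simp [hA, mem_copies, A₁, embedFactor, hx, hy, hz, eq_comm]
  rw [hA₁, copies_inv,
    card_copies_mul_copies one_notMem_A₁ one_notMem_A₁_inv disjoint_A₁_A₁_inv
      (by decide),
    card_copies_mul_copies one_notMem_A₁_inv one_notMem_A₁ disjoint_A₁_A₁_inv.symm
      (by decide),
    card_A₁_mul_inv_erase_one, card_A₁_inv_mul_erase_one, Fintype.card_fin]
  push_cast
  ring
end

section
/- Let G be a group and A a finite subset of G with |AA^{-1}| ≠ |A^{-1}A|. Then |A| ≥ 4. Equivalently, for any group G and any finite subset A of G with |A| ≤ 3, one has |AA^{-1}| = |A^{-1}A|. -/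
/-!
Sending `a * b⁻¹` to `b⁻¹ * a` is a well-defined bijection `A * A⁻¹ → A⁻¹ * A` as soon as
`a * b⁻¹ = c * d⁻¹ ↔ b⁻¹ * a = d⁻¹ * c` for all `a, b, c, d ∈ A`. This equivalence holds whenever
two of the four letters coincide (for `b = c`, say, both sides say `a = b * d⁻¹ * b`), and when
`|A| ≤ 3` two of any four elements of `A` coincide.
-/

open scoped Pointwise

namespace Finset

section Image

variable {α β γ : Type*} [DecidableEq β] [DecidableEq γ] {s : Finset α} {f : α → β} {g : α → γ}

theorem card_image_le_card_image_of_forall_eq_imp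
    (h : ∀ x ∈ s, ∀ y ∈ s, f x = f y → g x = g y) : #(s.image g) ≤ #(s.image f) := by
  rcases s.eq_empty_or_nonempty with rfl | ⟨x₀, -⟩
  · simp
  have : Nonempty α := ⟨x₀⟩
  refine card_le_card_of_surjOn (g ∘ Function.invFunOn f s) fun z hz => ?_
  obtain ⟨x, hx, rfl⟩ := mem_image.mp hz
  have hex : ∃ y ∈ (s : Set α), f y = f x := ⟨x, hx, rfl⟩
  exact ⟨f x, mem_image_of_mem f hx,
    h _ (Function.invFunOn_mem hex) _ hx (Function.invFunOn_eq hex)⟩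

theorem card_image_eq_card_image_of_forall_eq_iff
    (h : ∀ x ∈ s, ∀ y ∈ s, f x = f y ↔ g x = g y) : #(s.image f) = #(s.image g) :=
  (card_image_le_card_image_of_forall_eq_imp fun x hx y hy => (h x hx y hy).2).antisymm
    (card_image_le_card_image_of_forall_eq_imp fun x hx y hy => (h x hx y hy).1)

theorem eq_or_eq_of_card_le_three {A : Finset α} (hA : #A ≤ 3) {a b c d : α}
    (ha : a ∈ A) (hb : b ∈ A) (hc : c ∈ A) (hd : d ∈ A) :
    a = b ∨ a = c ∨ a = d ∨ b = c ∨ b = d ∨ c = d := by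
  classical
  by_contra! hne
  obtain ⟨hab, hac, had, hbc, hbd, hcd⟩ := hne
  have hsub : {a, b, c, d} ⊆ A := by simp [insert_subset_iff, *]
  have := (card_le_card hsub).trans hA
  simp [card_insert_of_notMem, *] at this

end Image

section Group

variable {G : Type*} [Group G]

theorem _root_.mul_inv_eq_mul_inv_iff_inv_mul_eq_inv_mul {a b c d : G}
    (h : a = b ∨ a = c ∨ a = d ∨ b = c ∨ b = d ∨ c = d) :
    a * b⁻¹ = c * d⁻¹ ↔ b⁻¹ * a = d⁻¹ * c := by
  rcases h with rfl | rfl | rfl | rfl | rfl | rfl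
  · rw [mul_inv_cancel, inv_mul_cancel, eq_mul_inv_iff_mul_eq, eq_inv_mul_iff_mul_eq, one_mul,
      mul_one]
  · simp
  · rw [eq_mul_inv_iff_mul_eq, eq_inv_mul_iff_mul_eq, mul_assoc]
  · rw [mul_inv_eq_iff_eq_mul, inv_mul_eq_iff_eq_mul, mul_assoc]
  · simp
  · rw [mul_inv_cancel, inv_mul_cancel, mul_inv_eq_one, inv_mul_eq_one, eq_comm]

variable [DecidableEq G]

theorem mul_inv_eq_image (A : Finset G) :
    A * A⁻¹ = (A ×ˢ A).image fun p => p.1 * p.2⁻¹ := by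
  rw [← div_eq_mul_inv, ← image_div_product]
  simp only [div_eq_mul_inv]

theorem inv_mul_eq_image (A : Finset G) :
    A⁻¹ * A = (A ×ˢ A).image fun p => p.2⁻¹ * p.1 := by
  ext g
  simp only [mem_mul, mem_inv', mem_image, mem_product, Prod.exists]
  constructor
  · rintro ⟨b, hb, a, ha, rfl⟩
    exact ⟨a, b⁻¹, ⟨ha, hb⟩, by rw [inv_inv]⟩
  · rintro ⟨a, b, ⟨ha, hb⟩, rfl⟩
    exact ⟨b⁻¹, by rwa [inv_inv], a, ha, rfl⟩

theorem card_mul_inv_eq_card_inv_mul_of_card_le_three {A : Finset G} (hA : #A ≤ 3) :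
    #(A * A⁻¹) = #(A⁻¹ * A) := by
  rw [A.mul_inv_eq_image, A.inv_mul_eq_image]
  refine card_image_eq_card_image_of_forall_eq_iff fun p hp q hq => ?_
  rw [mem_product] at hp hq
  exact mul_inv_eq_mul_inv_iff_inv_mul_eq_inv_mul
    (eq_or_eq_of_card_le_three hA hp.1 hp.2 hq.1 hq.2)

end Group

end Finset

/-- If `A` is a finite subset of a group `G` with `|A * A⁻¹| ≠ |A⁻¹ * A|`, then `|A| ≥ 4`. -/
theorem stmt_6 {G : Type*} [Group G] [DecidableEq G] (A : Finset G)
    (h : (A * A⁻¹).card ≠ (A⁻¹ * A).card) :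
    4 ≤ A.card := by
  by_contra! hA
  exact h (Finset.card_mul_inv_eq_card_inv_mul_of_card_le_three (Nat.le_of_lt_succ hA))
end

section
/- Let G be a group with no elements of order 2 (i.e., g^2 = e implies g = e), and let A be a finite subset of G with |A| = 4. Then |AA^{-1}| = |A^{-1}A|. -/
/-!
`A * A⁻¹` and `A⁻¹ * A` are the images of `A ×ˢ A` under `(a, b) ↦ a * b⁻¹` and
`(a, b) ↦ a⁻¹ * b`. Their fibres have at most `#A ≤ 4` points, so inclusion–exclusion over the
fibres gives the size of the image in terms of the numbers of pairs, triples and quadruples of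
points on which the map is constant. The pair counts agree since
`a * b⁻¹ = c * d⁻¹ ↔ c⁻¹ * a = d⁻¹ * b`. In particular both maps identify the same consecutive
points `(a, b)`, `(b, c)`; and when `#A ≤ 4` and `G` has no element of order 2, any three points
with a common value under either map are chained together by such identifications, so the
triples and quadruples are the same for both maps.
-/

open Finset
open scoped Pointwise

namespace Finset

variable {α β : Type*} [DecidableEq β]

theorem card_filter_powersetCard_const [DecidableEq α] (f : α → β) (s : Finset α) {k : ℕ}
    (hk : k ≠ 0) :
    #{t ∈ s.powersetCard k | ∀ x ∈ t, ∀ y ∈ t, f x = f y} =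
      ∑ b ∈ s.image f, (#{a ∈ s | f a = b}).choose k := by
  have hbiUnion : {t ∈ s.powersetCard k | ∀ x ∈ t, ∀ y ∈ t, f x = f y} =
      (s.image f).biUnion fun b => {a ∈ s | f a = b}.powersetCard k := by
    ext t
    simp only [mem_filter, mem_powersetCard, mem_biUnion, mem_image, subset_iff]
    constructor
    · rintro ⟨⟨hts, rfl⟩, hconst⟩
      obtain ⟨x, hx⟩ := card_ne_zero.mp hk
      exact ⟨f x, ⟨x, hts hx, rfl⟩, fun y hy => ⟨hts hy, hconst y hy x hx⟩, rfl⟩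
    · rintro ⟨b, -, hsub, rfl⟩
      exact ⟨⟨fun x hx => (hsub hx).1, rfl⟩, fun x hx y hy => (hsub hx).2.trans (hsub hy).2.symm⟩
  rw [hbiUnion, card_biUnion]
  · simp only [card_powersetCard]
  · intro b _ b' _ hbb'
    refine disjoint_left.mpr fun t ht ht' => hbb' ?_
    obtain ⟨x, hx⟩ := card_ne_zero.mp ((mem_powersetCard.mp ht).2.trans_ne hk)
    rw [← (mem_filter.mp ((mem_powersetCard.mp ht).1 hx)).2,
      ← (mem_filter.mp ((mem_powersetCard.mp ht').1 hx)).2]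

theorem card_filter_product_eq (f : α → β) (s : Finset α) :
    #{p ∈ s ×ˢ s | f p.1 = f p.2} = ∑ b ∈ s.image f, #{a ∈ s | f a = b} ^ 2 := by
  rw [card_eq_sum_card_fiberwise (f := fun p => f p.1) (t := s.image f)]
  · refine sum_congr rfl fun b _ => ?_
    rw [sq, ← card_product]
    congr 1
    ext ⟨x, y⟩
    simp only [mem_filter, mem_product]
    grind
  · intro p hp
    exact mem_image_of_mem f (mem_product.mp (mem_filter.mp hp).1).1

/-- Summed over the fibres, the identity `1 = n - C(n, 2) + C(n, 3) - C(n, 4)` for `1 ≤ n ≤ 4`,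
with `2 * C(n, 2) = n ^ 2 - n`. -/
theorem two_mul_card_image_add_card_filter_product_eq [DecidableEq α] (f : α → β) (s : Finset α)
    (hfiber : ∀ b, #{a ∈ s | f a = b} ≤ 4) :
    2 * #(s.image f) + #{p ∈ s ×ˢ s | f p.1 = f p.2} +
        2 * #{t ∈ s.powersetCard 4 | ∀ x ∈ t, ∀ y ∈ t, f x = f y} =
      3 * #s + 2 * #{t ∈ s.powersetCard 3 | ∀ x ∈ t, ∀ y ∈ t, f x = f y} := by
  rw [card_filter_product_eq, card_filter_powersetCard_const f s four_ne_zero,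
    card_filter_powersetCard_const f s three_ne_zero, card_eq_sum_card_image f s, card_eq_sum_ones,
    mul_sum, mul_sum, mul_sum, mul_sum, ← sum_add_distrib, ← sum_add_distrib, ← sum_add_distrib]
  refine sum_congr rfl fun b hb => ?_
  obtain ⟨a, ha, rfl⟩ := mem_image.mp hb
  have hpos : 0 < #{x ∈ s | f x = f a} := card_pos.mpr ⟨a, mem_filter.mpr ⟨ha, rfl⟩⟩
  have hle := hfiber (f a)
  interval_cases #{x ∈ s | f x = f a} <;> rfl

theorem eq_or_eq_or_eq_or_eq_of_card_le_four [DecidableEq α] {A : Finset α} (hA : #A ≤ 4)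
    {a b c d e : α} (ha : a ∈ A) (hb : b ∈ A) (hc : c ∈ A) (hd : d ∈ A) (he : e ∈ A)
    (hab : a ≠ b) (hac : a ≠ c) (had : a ≠ d) (hbc : b ≠ c) (hbd : b ≠ d) (hcd : c ≠ d) :
    e = a ∨ e = b ∨ e = c ∨ e = d := by
  by_contra! hne
  have hsub : {e, a, b, c, d} ⊆ A := by
    simp only [insert_subset_iff, singleton_subset_iff]
    exact ⟨he, ha, hb, hc, hd⟩
  have := card_le_card hsub
  rw [card_insert_of_notMem (by simp [hne.1, hne.2.1, hne.2.2.1, hne.2.2.2]),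
    card_insert_of_notMem (by simp [hab, hac, had]), card_insert_of_notMem (by simp [hbc, hbd]),
    card_pair hcd] at this
  omega

end Finset

section Group

variable {G : Type*} [Group G]

def mulInv (p : G × G) : G := p.1 * p.2⁻¹

def invMul (p : G × G) : G := p.1⁻¹ * p.2

@[simp] theorem mulInv_mk (a b : G) : mulInv (a, b) = a * b⁻¹ := rfl

@[simp] theorem invMul_mk (a b : G) : invMul (a, b) = a⁻¹ * b := rfl

theorem mulInv_inv (p : G × G) : mulInv p⁻¹ = invMul p := by
  simp [mulInv, invMul]

theorem invMul_inv (p : G × G) : invMul p⁻¹ = mulInv p := by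
  simp [mulInv, invMul]

theorem mulInv_swap (p : G × G) : mulInv p.swap = (mulInv p)⁻¹ := by
  simp [mulInv]

theorem invMul_swap (p : G × G) : invMul p.swap = (invMul p)⁻¹ := by
  simp [invMul]

theorem mulInv_eq_one (p : G × G) : mulInv p = 1 ↔ p.1 = p.2 := mul_inv_eq_one

theorem eq_of_mulInv_eq_of_fst_eq {p q : G × G} (h : mulInv p = mulInv q) (h1 : p.1 = q.1) :
    p = q := by
  simp_all [mulInv, Prod.ext_iff]

theorem eq_of_mulInv_eq_of_snd_eq {p q : G × G} (h : mulInv p = mulInv q) (h2 : p.2 = q.2) :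
    p = q := by
  simp_all [mulInv, Prod.ext_iff]

theorem eq_of_invMul_eq_of_fst_eq {p q : G × G} (h : invMul p = invMul q) (h1 : p.1 = q.1) :
    p = q := by
  simp_all [invMul, Prod.ext_iff]

theorem mulInv_eq_mulInv_iff_invMul_eq_invMul (a b c d : G) :
    mulInv (a, b) = mulInv (c, d) ↔ invMul (c, a) = invMul (d, b) := by
  simp only [mulInv_mk, invMul_mk]
  rw [mul_inv_eq_iff_eq_mul, inv_mul_eq_iff_eq_mul, mul_assoc]

theorem mulInv_chain_eq_iff_invMul_chain_eq (a b c : G) :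
    mulInv (a, b) = mulInv (b, c) ↔ invMul (a, b) = invMul (b, c) := by
  rw [mulInv_eq_mulInv_iff_invMul_eq_invMul]
  conv_rhs => rw [← inv_inj, ← invMul_swap, ← invMul_swap]
  rfl

theorem fst_eq_snd_of_mulInv_eq_mulInv_swap (hG : ∀ g : G, g ^ 2 = 1 → g = 1) {p : G × G}
    (h : mulInv p = mulInv p.swap) : p.1 = p.2 := by
  rw [← mulInv_eq_one]
  refine hG _ ?_
  rw [sq]
  nth_rw 2 [h]
  rw [mulInv_swap, mul_inv_cancel]

variable [DecidableEq G]

theorem Finset.mul_inv_eq_image_mulInv (A : Finset G) : A * A⁻¹ = (A ×ˢ A).image mulInv := by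
  ext g
  simp only [mem_mul, mem_inv', mem_image, mem_product, mulInv, Prod.exists]
  constructor
  · rintro ⟨a, ha, b, hb, rfl⟩
    exact ⟨a, b⁻¹, ⟨ha, hb⟩, by rw [inv_inv]⟩
  · rintro ⟨a, b, ⟨ha, hb⟩, rfl⟩
    exact ⟨a, ha, b⁻¹, by rwa [inv_inv], rfl⟩

theorem Finset.inv_mul_eq_image_invMul (A : Finset G) : A⁻¹ * A = (A ×ˢ A).image invMul := by
  ext g
  simp only [mem_mul, mem_inv', mem_image, mem_product, invMul, Prod.exists]
  constructor
  · rintro ⟨a, ha, b, hb, rfl⟩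
    exact ⟨a⁻¹, b, ⟨ha, hb⟩, by rw [inv_inv]⟩
  · rintro ⟨a, b, ⟨ha, hb⟩, rfl⟩
    exact ⟨a⁻¹, by rwa [inv_inv], b, hb, rfl⟩

theorem card_filter_mulInv_eq_le (A : Finset G) (g : G) :
    #{p ∈ A ×ˢ A | mulInv p = g} ≤ #A :=
  card_le_card_of_injOn Prod.snd (fun _ hp => (mem_product.mp (mem_filter.mp hp).1).2)
    fun _ hp _ hq h => eq_of_mulInv_eq_of_snd_eq
      ((mem_filter.mp hp).2.trans (mem_filter.mp hq).2.symm) h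

theorem card_filter_invMul_eq_le (A : Finset G) (g : G) :
    #{p ∈ A ×ˢ A | invMul p = g} ≤ #A :=
  card_le_card_of_injOn Prod.fst (fun _ hp => (mem_product.mp (mem_filter.mp hp).1).1)
    fun _ hp _ hq h => eq_of_invMul_eq_of_fst_eq
      ((mem_filter.mp hp).2.trans (mem_filter.mp hq).2.symm) h

theorem card_filter_mulInv_eq_card_filter_invMul_eq (A : Finset G) :
    #{p ∈ (A ×ˢ A) ×ˢ (A ×ˢ A) | mulInv p.1 = mulInv p.2} =
      #{p ∈ (A ×ˢ A) ×ˢ (A ×ˢ A) | invMul p.1 = invMul p.2} := by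
  refine card_nbij' (fun p => ((p.2.1, p.1.1), (p.2.2, p.1.2)))
    (fun p => ((p.1.2, p.2.2), (p.1.1, p.2.1))) ?_ ?_ (fun _ _ => rfl) (fun _ _ => rfl)
  · rintro ⟨⟨a, b⟩, c, d⟩ h
    simp only [coe_filter, mem_product, Set.mem_ofPred_eq] at h ⊢
    exact ⟨by tauto, (mulInv_eq_mulInv_iff_invMul_eq_invMul a b c d).mp h.2⟩
  · rintro ⟨⟨c, a⟩, d, b⟩ h
    simp only [coe_filter, mem_product, Set.mem_ofPred_eq] at h ⊢
    exact ⟨by tauto, (mulInv_eq_mulInv_iff_invMul_eq_invMul a b c d).mpr h.2⟩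

theorem invMul_eq_invMul_of_mulInv_eq_mulInv (hG : ∀ g : G, g ^ 2 = 1 → g = 1)
    {A : Finset G} (hA : #A ≤ 4) {x y z : G × G} (hx : x ∈ A ×ˢ A) (hy : y ∈ A ×ˢ A)
    (hz : z ∈ A ×ˢ A) (hxy : x ≠ y) (hxz : x ≠ z) (hyz : y ≠ z) (hxy' : mulInv x = mulInv y)
    (hxz' : mulInv x = mulInv z) :
    invMul x = invMul y := by
  have hyz' : mulInv y = mulInv z := hxy'.symm.trans hxz'
  obtain ⟨a, b⟩ := x
  obtain ⟨c, d⟩ := y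
  obtain ⟨e, f⟩ := z
  simp only [mem_product] at hx hy hz
  by_cases hab : a = b
  · have hcd : c = d := (mulInv_eq_one _).mp (hxy'.symm.trans ((mulInv_eq_one _).mpr hab))
    simp [hab, hcd]
  by_cases hbc : b = c
  · subst hbc
    exact (mulInv_chain_eq_iff_invMul_chain_eq a b d).mp hxy'
  by_cases hda : d = a
  · subst hda
    exact ((mulInv_chain_eq_iff_invMul_chain_eq c d b).mp hxy'.symm).symm
  -- `a, b, c, d` exhaust `A`, so `z` links `x` and `y` into a chain or reverses one of them.
  have hac : a ≠ c := fun h => hxy (eq_of_mulInv_eq_of_fst_eq hxy' h)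
  have hbd : b ≠ d := fun h => hxy (eq_of_mulInv_eq_of_snd_eq hxy' h)
  have hcd : c ≠ d := fun h => hab ((mulInv_eq_one _).mp (hxy'.trans (by simp [h])))
  have he : e = b ∨ e = d := by
    have hea : e ≠ a := fun h => hxz (eq_of_mulInv_eq_of_fst_eq hxz' h.symm)
    have hec : e ≠ c := fun h => hyz (eq_of_mulInv_eq_of_fst_eq hyz' h.symm)
    rcases eq_or_eq_or_eq_or_eq_of_card_le_four hA hx.1 hx.2 hy.1 hy.2 hz.1 hab hac (Ne.symm hda)
      hbc hbd hcd with h | h | h | h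
    exacts [absurd h hea, Or.inl h, absurd h hec, Or.inr h]
  have hf : f = a ∨ f = c := by
    have hfb : f ≠ b := fun h => hxz (eq_of_mulInv_eq_of_snd_eq hxz' h.symm)
    have hfd : f ≠ d := fun h => hyz (eq_of_mulInv_eq_of_snd_eq hyz' h.symm)
    rcases eq_or_eq_or_eq_or_eq_of_card_le_four hA hx.1 hx.2 hy.1 hy.2 hz.2 hab hac (Ne.symm hda)
      hbc hbd hcd with h | h | h | h
    exacts [Or.inl h, absurd h hfb, Or.inr h, absurd h hfd]
  rcases he with rfl | rfl <;> rcases hf with rfl | rfl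
  · exact absurd (fst_eq_snd_of_mulInv_eq_mulInv_swap hG hxz') hab
  · rw [(mulInv_chain_eq_iff_invMul_chain_eq a e f).mp hxz',
      (mulInv_chain_eq_iff_invMul_chain_eq e f d).mp (hxz'.symm.trans hxy')]
  · rw [← (mulInv_chain_eq_iff_invMul_chain_eq e f b).mp hxz'.symm,
      ← (mulInv_chain_eq_iff_invMul_chain_eq c e f).mp hyz']
  · exact absurd (fst_eq_snd_of_mulInv_eq_mulInv_swap hG hyz') hcd

theorem mulInv_eq_mulInv_of_invMul_eq_invMul (hG : ∀ g : G, g ^ 2 = 1 → g = 1)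
    {A : Finset G} (hA : #A ≤ 4) {x y z : G × G} (hx : x ∈ A ×ˢ A) (hy : y ∈ A ×ˢ A)
    (hz : z ∈ A ×ˢ A) (hxy : x ≠ y) (hxz : x ≠ z) (hyz : y ≠ z) (hxy' : invMul x = invMul y)
    (hxz' : invMul x = invMul z) :
    mulInv x = mulInv y := by
  have hinv {p : G × G} (hp : p ∈ A ×ˢ A) : p⁻¹ ∈ A⁻¹ ×ˢ A⁻¹ :=
    mem_product.mpr ⟨inv_mem_inv (mem_product.mp hp).1, inv_mem_inv (mem_product.mp hp).2⟩
  simpa only [invMul_inv] using invMul_eq_invMul_of_mulInv_eq_mulInv hG (A := A⁻¹)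
    (by rwa [card_inv]) (hinv hx) (hinv hy) (hinv hz) (inv_injective.ne hxy)
    (inv_injective.ne hxz) (inv_injective.ne hyz) (by simpa only [mulInv_inv] using hxy')
    (by simpa only [mulInv_inv] using hxz')

theorem forall_mulInv_eq_iff_forall_invMul_eq (hG : ∀ g : G, g ^ 2 = 1 → g = 1)
    {A : Finset G} (hA : #A ≤ 4) {S : Finset (G × G)} (hS : S ⊆ A ×ˢ A) (hS3 : 3 ≤ #S) :
    (∀ x ∈ S, ∀ y ∈ S, mulInv x = mulInv y) ↔ (∀ x ∈ S, ∀ y ∈ S, invMul x = invMul y) := by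
  have hthird {x y : G × G} (hx : x ∈ S) (hy : y ∈ S) (hxy : x ≠ y) :
      ∃ z ∈ S, x ≠ z ∧ y ≠ z := by
    obtain ⟨z, hz⟩ : ((S.erase x).erase y).Nonempty := by
      rw [← card_pos, card_erase_of_mem (mem_erase.mpr ⟨hxy.symm, hy⟩), card_erase_of_mem hx]
      omega
    simp only [mem_erase] at hz
    exact ⟨z, hz.2.2, Ne.symm hz.2.1, Ne.symm hz.1⟩
  constructor
  · intro hconst x hx y hy
    obtain rfl | hxy := eq_or_ne x y
    · rfl
    obtain ⟨z, hz, hxz, hyz⟩ := hthird hx hy hxy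
    exact invMul_eq_invMul_of_mulInv_eq_mulInv hG hA (hS hx) (hS hy) (hS hz) hxy hxz hyz
      (hconst x hx y hy) (hconst x hx z hz)
  · intro hconst x hx y hy
    obtain rfl | hxy := eq_or_ne x y
    · rfl
    obtain ⟨z, hz, hxz, hyz⟩ := hthird hx hy hxy
    exact mulInv_eq_mulInv_of_invMul_eq_invMul hG hA (hS hx) (hS hy) (hS hz) hxy hxz hyz
      (hconst x hx y hy) (hconst x hx z hz)

theorem card_mul_inv_eq_card_inv_mul (hG : ∀ g : G, g ^ 2 = 1 → g = 1) {A : Finset G}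
    (hA : #A ≤ 4) : #(A * A⁻¹) = #(A⁻¹ * A) := by
  have hR := two_mul_card_image_add_card_filter_product_eq mulInv (A ×ˢ A)
    fun g => (card_filter_mulInv_eq_le A g).trans hA
  have hL := two_mul_card_image_add_card_filter_product_eq invMul (A ×ˢ A)
    fun g => (card_filter_invMul_eq_le A g).trans hA
  have hconst {k : ℕ} (hk : 3 ≤ k) :
      {t ∈ (A ×ˢ A).powersetCard k | ∀ x ∈ t, ∀ y ∈ t, mulInv x = mulInv y} =
        {t ∈ (A ×ˢ A).powersetCard k | ∀ x ∈ t, ∀ y ∈ t, invMul x = invMul y} :=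
    filter_congr fun t ht => forall_mulInv_eq_iff_forall_invMul_eq hG hA
      (mem_powersetCard.mp ht).1 ((mem_powersetCard.mp ht).2 ▸ hk)
  rw [hconst le_rfl, hconst (by norm_num), card_filter_mulInv_eq_card_filter_invMul_eq] at hR
  rw [mul_inv_eq_image_mulInv, inv_mul_eq_image_invMul]
  omega

end Group

/-- If `G` is a group with no elements of order 2 and `A` is a finite subset of `G` with
`|A| = 4`, then `|A * A⁻¹| = |A⁻¹ * A|`. -/
theorem stmt_8 {G : Type*} [Group G] [DecidableEq G]
    (hG : ∀ g : G, g ^ 2 = 1 → g = 1) (A : Finset G) (hA : A.card = 4) :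
    (A * A⁻¹).card = (A⁻¹ * A).card :=
  card_mul_inv_eq_card_inv_mul hG hA.le
end

section
/- Let F_2 be the free group on two generators x and y. For every integer k ≥ 1, the set C_k = {x^i : 1 ≤ i ≤ k} ∪ {x^i y : 1 ≤ i ≤ k} ⊆ F_2 satisfies |C_k| = 2k and |C_k C_k^{-1}| = 2k^2 + 2k - 1. -/
/-!
Every element of `C_k C_k⁻¹` has the form `x^a y^e x^(-b)` with `e ∈ {-1, 0, 1}`, namely
`x^(i-j)`, `x^i y x^(-j)` and `x^i y⁻¹ x^(-j)` for `1 ≤ i, j ≤ k`. Letting `x` act on `ℚ` by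
`t ↦ 2t` and `y` by `t ↦ t + 1`, the element `x^a y^e x^(-b)` acts by `t ↦ 2^(a-b) t + e 2^a`, from
which `(a, e, b)` can be read off once `b` is normalised to `0` when `e = 0`. Hence
`|C_k C_k⁻¹| = (2k - 1) + k² + k²`, and likewise `|C_k| = 2k`.
-/

open scoped Pointwise
open Finset

section Sandwich

variable {G : Type*} [Group G] (x y : G)

def sandwich (p : ℤ × ℤ × ℤ) : G := x ^ p.1 * y ^ p.2.1 * (x ^ p.2.2)⁻¹

lemma sandwich_mul_inv_sandwich (i e j f : ℤ) :
    sandwich x y (i, e, 0) * (sandwich x y (j, f, 0))⁻¹ = sandwich x y (i, e - f, j) := by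
  simp only [sandwich, zpow_zero, inv_one, mul_one, mul_inv_rev, zpow_sub, mul_assoc]

lemma sandwich_zero (i j : ℤ) : sandwich x y (i, 0, j) = sandwich x y (i - j, 0, 0) := by
  simp only [sandwich, zpow_zero, mul_one, inv_one, zpow_sub]

/-- Since `x^a y^0 x^(-b) = x^(a-b)`, triples with `e = 0` are normalised to `b = 0`; on the
remaining ones `sandwich` is injective in a free group. -/
def normalTriples : Set (ℤ × ℤ × ℤ) := {p | |p.2.1| ≤ 1 ∧ (p.2.1 = 0 → p.2.2 = 0)}

noncomputable def ladderIndex (k : ℕ) : Finset (ℤ × ℤ × ℤ) := Icc 1 (k : ℤ) ×ˢ {0, 1} ×ˢ {0}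

noncomputable def quotientIndex (k : ℕ) : Finset (ℤ × ℤ × ℤ) :=
  Icc (1 - k : ℤ) (k - 1) ×ˢ {0} ×ˢ {0} ∪ Icc 1 (k : ℤ) ×ˢ {1, -1} ×ˢ Icc 1 (k : ℤ)

variable [DecidableEq G] (k : ℕ)

lemma image_pow_union_image_pow_mul_eq_image_sandwich :
    (Icc 1 k).image (fun i => x ^ i) ∪ (Icc 1 k).image (fun i => x ^ i * y) =
      (ladderIndex k).image (sandwich x y) := by
  ext g
  simp only [ladderIndex, mem_union, mem_image, mem_product, mem_Icc, mem_insert, mem_singleton,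
    Prod.exists]
  constructor
  · rintro (⟨i, hi, rfl⟩ | ⟨i, hi, rfl⟩)
    · exact ⟨i, 0, 0, by omega, by simp [sandwich]⟩
    · exact ⟨i, 1, 0, by omega, by simp [sandwich]⟩
  · rintro ⟨i, e, _, ⟨hi, rfl | rfl, rfl⟩, rfl⟩ <;> lift i to ℕ using (by omega)
    · exact Or.inl ⟨i, by omega, by simp [sandwich]⟩
    · exact Or.inr ⟨i, by omega, by simp [sandwich]⟩

lemma image_sandwich_ladderIndex_mul_inv :
    (ladderIndex k).image (sandwich x y) * ((ladderIndex k).image (sandwich x y))⁻¹ =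
      (quotientIndex k).image (sandwich x y) := by
  ext g
  simp only [ladderIndex, quotientIndex, mem_mul, mem_inv, mem_union, mem_image, mem_product,
    mem_Icc, mem_insert, mem_singleton, Prod.exists]
  constructor
  · rintro ⟨_, ⟨i, e, _, ⟨hi, he, rfl⟩, rfl⟩, _, ⟨_, ⟨j, f, _, ⟨hj, hf, rfl⟩, rfl⟩, rfl⟩, rfl⟩
    rw [sandwich_mul_inv_sandwich]
    obtain ⟨rfl, rfl⟩ | ⟨rfl, rfl⟩ | ⟨rfl, rfl⟩ | ⟨rfl, rfl⟩ :
        (e = 0 ∧ f = 0) ∨ (e = 1 ∧ f = 1) ∨ (e = 1 ∧ f = 0) ∨ (e = 0 ∧ f = 1) := by omega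
    · exact ⟨i - j, 0, 0, by omega, by rw [sub_self, sandwich_zero x y i j]⟩
    · exact ⟨i - j, 0, 0, by omega, by rw [sub_self, sandwich_zero x y i j]⟩
    · exact ⟨i, 1, j, by omega, rfl⟩
    · exact ⟨i, -1, j, by omega, rfl⟩
  · rintro ⟨i, e, j, ⟨hi, rfl, rfl⟩ | ⟨hi, rfl | rfl, hj⟩, rfl⟩
    · refine ⟨_, ⟨max i 0 + 1, 0, 0, by omega, rfl⟩, _,
        ⟨_, ⟨max (-i) 0 + 1, 0, 0, by omega, rfl⟩, rfl⟩, ?_⟩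
      rw [sandwich_mul_inv_sandwich, sub_self, sandwich_zero]
      congr
      omega
    · refine ⟨_, ⟨i, 1, 0, by omega, rfl⟩, _, ⟨_, ⟨j, 0, 0, by omega, rfl⟩, rfl⟩, ?_⟩
      rw [sandwich_mul_inv_sandwich, sub_zero]
    · refine ⟨_, ⟨i, 0, 0, by omega, rfl⟩, _, ⟨_, ⟨j, 1, 0, by omega, rfl⟩, rfl⟩, ?_⟩
      rw [sandwich_mul_inv_sandwich, zero_sub]

end Sandwich

lemma coe_ladderIndex_subset_normalTriples (k : ℕ) : ↑(ladderIndex k) ⊆ normalTriples := by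
  rintro ⟨m, e, n⟩ hp
  simp only [ladderIndex, coe_product, Set.mem_prod, mem_coe, mem_insert, mem_singleton] at hp
  rcases hp with ⟨-, rfl | rfl, rfl⟩ <;> simp [normalTriples]

lemma coe_quotientIndex_subset_normalTriples (k : ℕ) : ↑(quotientIndex k) ⊆ normalTriples := by
  rintro ⟨m, e, n⟩ hp
  simp only [quotientIndex, coe_union, coe_product, Set.mem_union, Set.mem_prod, mem_coe,
    mem_insert, mem_singleton] at hp
  rcases hp with ⟨-, rfl, rfl⟩ | ⟨-, rfl | rfl, -⟩ <;> simp [normalTriples]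

lemma card_ladderIndex (k : ℕ) : (ladderIndex k).card = 2 * k := by
  simp [ladderIndex, mul_comm]

lemma card_quotientIndex (k : ℕ) : (quotientIndex k).card = 2 * k ^ 2 + 2 * k - 1 := by
  have hdisj : Disjoint (Icc (1 - k : ℤ) (k - 1) ×ˢ {0} ×ˢ {0})
      (Icc 1 (k : ℤ) ×ˢ ({1, -1} : Finset ℤ) ×ˢ Icc 1 (k : ℤ)) := by
    rw [disjoint_left]
    rintro ⟨m, e, n⟩ hp hq
    simp only [mem_product, mem_singleton, mem_insert] at hp hq
    omega
  rw [quotientIndex, card_union_of_disjoint hdisj]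
  simp only [card_product, Int.card_Icc, card_singleton, card_pair (by decide : (1 : ℤ) ≠ -1)]
  have hpowers : (↑k - 1 + 1 - (1 - ↑k) : ℤ).toNat = 2 * k - 1 := by omega
  have hfactor : (↑k + 1 - 1 : ℤ).toNat = k := by omega
  rw [hpowers, hfactor]
  rcases Nat.eq_zero_or_pos k with rfl | hk
  · simp
  · have : k * (2 * k) = 2 * k ^ 2 := by ring
    omega

namespace FreeGroup

variable {α : Type*} [DecidableEq α]

noncomputable def affineRep (a : α) : FreeGroup α →* ℚ ≃ᵃ[ℚ] ℚ :=
  lift fun c =>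
    if c = a then AffineEquiv.homothetyUnitsMulHom 0 (Units.mk0 2 two_ne_zero)
    else AffineEquiv.constVAdd ℚ ℚ 1

lemma affineRep_sandwich {a b : α} (hab : a ≠ b) (p : ℤ × ℤ × ℤ) (t : ℚ) :
    affineRep a (sandwich (of a) (of b) p) t = 2 ^ (p.1 - p.2.2) * t + p.2.1 * 2 ^ p.1 := by
  have hx (n : ℤ) : affineRep a (of a ^ n) =
      AffineEquiv.homothetyUnitsMulHom 0 (Units.mk0 (2 : ℚ) two_ne_zero ^ n) := by
    rw [_root_.map_zpow, _root_.map_zpow]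
    simp [affineRep]
  have hy (n : ℤ) : affineRep a (of b ^ n) = AffineEquiv.constVAdd ℚ ℚ (n : ℚ) := by
    simp [affineRep, hab.symm, ← AffineEquiv.constVAdd_zsmul]
  rw [sandwich, _root_.map_mul, _root_.map_mul, _root_.map_inv, hx, hy, hx, ← _root_.map_inv]
  simp only [AffineEquiv.coe_mul, Function.comp_apply, AffineEquiv.coe_homothetyUnitsMulHom_apply,
    AffineMap.homothety_apply, AffineEquiv.constVAdd_apply, Units.val_zpow_eq_zpow_val,
    Units.val_inv_eq_inv_val, Units.val_mk0, vsub_eq_sub, vadd_eq_add, sub_zero, add_zero,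
    smul_eq_mul]
  rw [zpow_sub₀ (two_ne_zero : (2 : ℚ) ≠ 0)]
  ring

/-- Evaluating the affine action at `0` gives `e 2^a`, which determines `e` and `a` since
`|e| ≤ 1`; evaluating at `1` then gives `a - b`. -/
lemma sandwich_injOn_normalTriples {a b : α} (hab : a ≠ b) :
    Set.InjOn (sandwich (of a) (of b)) normalTriples := by
  rintro ⟨m, e, n⟩ ⟨he, hn⟩ ⟨m', e', n'⟩ ⟨he', hn'⟩ h
  have h₀ := congr(affineRep a $h 0)
  have h₁ := congr(affineRep a $h 1)
  simp only [affineRep_sandwich hab, mul_zero, zero_add, mul_one] at h₀ h₁ he he' hn hn'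
  have hpow := zpow_right_injective₀ (a := (2 : ℚ)) (by norm_num) (by norm_num)
  have hpow_ne (k : ℤ) : (2 : ℚ) ^ k ≠ 0 := by positivity
  have hshift : m - n = m' - n' := hpow (by linarith)
  have he_iff : e = 0 ↔ e' = 0 := by
    rw [← Int.cast_eq_zero (α := ℚ), ← mul_eq_zero_iff_right (hpow_ne m), h₀,
      mul_eq_zero_iff_right (hpow_ne m'), Int.cast_eq_zero]
  simp only [Prod.mk.injEq]
  by_cases he0 : e = 0
  · have := hn he0
    have := hn' (he_iff.1 he0)
    omega
  · have habs (k : ℤ) (hk : |k| ≤ 1) (hk0 : k ≠ 0) : |(k : ℚ)| = 1 := by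
      rcases Int.abs_le_one_iff.1 hk with rfl | rfl | rfl <;> simp_all
    have hm : m = m' := hpow (show (2 : ℚ) ^ m = 2 ^ m' by
      simpa [abs_mul, habs e he he0, habs e' he' (mt he_iff.2 he0)] using congr(|$h₀|))
    subst hm
    have : e = e' := by exact_mod_cast mul_right_cancel₀ (hpow_ne m) h₀
    omega

end FreeGroup

theorem stmt_13_general (k : ℕ)
    (x y : FreeGroup (Fin 2)) (hx : x = FreeGroup.of 0) (hy : y = FreeGroup.of 1)
    (C : Finset (FreeGroup (Fin 2)))
    (hC : C = (Finset.Icc 1 k).image (fun i => x ^ i) ∪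
              (Finset.Icc 1 k).image (fun i => x ^ i * y)) :
    C.card = 2 * k ∧ (C * C⁻¹).card = 2 * k ^ 2 + 2 * k - 1 := by
  subst hx hy hC
  have hinj := FreeGroup.sandwich_injOn_normalTriples (a := (0 : Fin 2)) (b := 1) (by decide)
  rw [image_pow_union_image_pow_mul_eq_image_sandwich, image_sandwich_ladderIndex_mul_inv]
  exact ⟨(card_image_of_injOn (hinj.mono (coe_ladderIndex_subset_normalTriples k))).trans
      (card_ladderIndex k),
    (card_image_of_injOn (hinj.mono (coe_quotientIndex_subset_normalTriples k))).trans
      (card_quotientIndex k)⟩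

/-- In the free group on two generators `x, y`, for `k ≥ 1` the set
`C_k = {x^i : 1 ≤ i ≤ k} ∪ {x^i y : 1 ≤ i ≤ k}` satisfies `|C_k| = 2k` and
`|C_k C_k⁻¹| = 2k² + 2k - 1`. -/
theorem stmt_13 (k : ℕ) (hk : 1 ≤ k)
    (x y : FreeGroup (Fin 2)) (hx : x = FreeGroup.of 0) (hy : y = FreeGroup.of 1)
    (C : Finset (FreeGroup (Fin 2)))
    (hC : C = (Finset.Icc 1 k).image (fun i => x ^ i) ∪
              (Finset.Icc 1 k).image (fun i => x ^ i * y)) :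
    C.card = 2 * k ∧ (C * C⁻¹).card = 2 * k ^ 2 + 2 * k - 1 :=
  stmt_13_general k x y hx hy C hC
end
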